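/- arXiv:1403.7757 — 2 statements merged into one kernel-verified Lean document; each statement's English description precedes it below -/
import Mathlib

section
/- Let N be a finite simple and cosimple matroid with an exact k-separation (A, B). Let M be a finite simple and cosimple matroid with distinct elements e, f ∈ E(M) \ E(N) such that M \ e / f = N. If λ_{M/f}(A) = k − 1 and λ_{M\e}(A) = k − 1, then λ_M(A) = k − 1. -/
open Set

namespace SeymourDecomp

variable {α : Type*}

/-- The rank of a set `X` in a (finite) matroid `M`: the largest cardinality of an
independent subset of `X`. -/
noncomputable def rk (M : Matroid α) (X : Set α) : ℕ :=
  sSup {n | ∃ I, M.Indep I ∧ I ⊆ X ∧ I.ncard = n}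

/-- The connectivity function `λ_M(X) = r(X) + r(E − X) − r(M)` (integer-valued). -/
noncomputable def lam (M : Matroid α) (X : Set α) : ℤ :=
  (rk M X : ℤ) + (rk M (M.E \ X) : ℤ) - (rk M M.E : ℤ)

/-- A circuit: a minimal dependent set. -/
def IsCircuit (M : Matroid α) (C : Set α) : Prop :=
  M.Dep C ∧ ∀ D, D ⊂ C → M.Indep D

/-- A cocircuit: a circuit of the dual matroid. -/
def IsCocircuit (M : Matroid α) (C : Set α) : Prop :=
  IsCircuit M✶ C

/-- A loop: a one-element circuit. -/
def IsLoop (M : Matroid α) (e : α) : Prop := IsCircuit M {e}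

/-- A coloop: a one-element cocircuit. -/
def IsColoop (M : Matroid α) (e : α) : Prop := IsCocircuit M {e}

/-- A matroid is simple if it has no loops and no 2-element circuits,
i.e. every circuit has at least 3 elements. -/
def Simple (M : Matroid α) : Prop := ∀ C, IsCircuit M C → 3 ≤ C.ncard

/-- A matroid is cosimple if its dual is simple. -/
def Cosimple (M : Matroid α) : Prop := Simple M✶

/-- Deletion of a set of elements. -/
def delete (M : Matroid α) (D : Set α) : Matroid α := M.restrict (M.E \ D)

/-- Contraction of a set of elements: `M / C = (M✶ \ C)✶`. -/
def contract (M : Matroid α) (C : Set α) : Matroid α := (delete M✶ C)✶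

/-- `N` is a minor of `M` if it is obtained from `M` by contracting a set and
deleting a disjoint set. -/
def IsMinor (N M : Matroid α) : Prop :=
  ∃ C D : Set α, C ⊆ M.E ∧ D ⊆ M.E ∧ Disjoint C D ∧ N = delete (contract M C) D

/-- `(A, B)` is a `k`-separation of `M`. -/
def KSep (M : Matroid α) (k : ℕ) (A B : Set α) : Prop :=
  A ∪ B = M.E ∧ Disjoint A B ∧ k ≤ A.ncard ∧ k ≤ B.ncard ∧ lam M A ≤ (k : ℤ) - 1

/-- `(A, B)` is an exact `k`-separation of `M`. -/
def ExactKSep (M : Matroid α) (k : ℕ) (A B : Set α) : Prop :=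
  A ∪ B = M.E ∧ Disjoint A B ∧ k ≤ A.ncard ∧ k ≤ B.ncard ∧ lam M A = (k : ℤ) - 1

/-- For `n ≥ 2`, `M` is `n`-connected if it has no `k`-separation for `k ≤ n − 1`. -/
def NConnected (M : Matroid α) (n : ℕ) : Prop :=
  ∀ k, 1 ≤ k → k ≤ n - 1 → ∀ A B : Set α, ¬ KSep M k A B

/-- A triangle: a 3-element circuit. -/
def Triangle (M : Matroid α) (T : Set α) : Prop := IsCircuit M T ∧ T.ncard = 3

/-- A triad: a 3-element cocircuit. -/
def Triad (M : Matroid α) (T : Set α) : Prop := IsCocircuit M T ∧ T.ncard = 3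

/-- Two matroids on the same ground type are isomorphic if there is a bijection
between their ground sets preserving independence. -/
def Iso (M N : Matroid α) : Prop :=
  ∃ φ : α → α, Set.BijOn φ M.E N.E ∧ ∀ I, I ⊆ M.E → (M.Indep I ↔ N.Indep (φ '' I))

/-- A class of matroids closed under minors. -/
def MinorClosed (𝓜 : Set (Matroid α)) : Prop :=
  ∀ M ∈ 𝓜, ∀ N : Matroid α, IsMinor N M → N ∈ 𝓜

/-- A class of matroids closed under isomorphism. -/
def IsoClosed (𝓜 : Set (Matroid α)) : Prop :=
  ∀ M ∈ 𝓜, ∀ N : Matroid α, Iso M N → N ∈ 𝓜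

/-! Writing `r` for the rank of `M`, deletion and contraction act on ranks by
`r_{M\e}(X) = r(X)` and `r_{M/f}(X) = r(X ∪ f) − r(f)`. Expanding the four connectivities with
these rules, the terms of `λ_M(A) + λ_{M\e/f}(A)` and of `λ_{M\e}(A) + λ_{M/f}(A)` match up for
every `A` avoiding `e` and `f`, so `λ_M(A) = (k − 1) + (k − 1) − λ_N(A) = k − 1`. -/

open Matroid

variable {M : Matroid α} {C D I X : Set α}

lemma rk_eq_ncard_of_isBasis' [M.RankFinite] (hI : M.IsBasis' I X) : rk M X = I.ncard := by
  refine IsGreatest.csSup_eq ⟨⟨I, hI.indep, hI.subset, rfl⟩, ?_⟩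
  rintro _ ⟨J, hJ, hJX, rfl⟩
  obtain ⟨K, hK, hJK⟩ := hJ.subset_isBasis'_of_subset hJX
  calc J.ncard ≤ K.ncard := ncard_le_ncard hJK hK.indep.finite
    _ = I.ncard := by rw [ncard_def, ncard_def, hK.encard_eq_encard hI]

lemma delete_ground (M : Matroid α) (D : Set α) : (delete M D).E = M.E \ D := rfl

lemma contract_ground (M : Matroid α) (C : Set α) : (contract M C).E = M.E \ C := rfl

instance delete_rankFinite [M.RankFinite] : (delete M D).RankFinite :=
  Matroid.delete_rankFinite

instance contract_rankFinite [M.RankFinite] : (contract M C).RankFinite :=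
  Matroid.contract_rankFinite

lemma rk_delete [M.RankFinite] (D X : Set α) : rk (delete M D) X = rk M (X \ D) := by
  obtain ⟨I, hI⟩ := M.exists_isBasis' (X \ D)
  have hID : rk (delete M D) X = I.ncard := rk_eq_ncard_of_isBasis' (delete_isBasis'_iff.2 hI)
  rw [hID, rk_eq_ncard_of_isBasis' hI]

lemma rk_contract_add [M.RankFinite] (hXC : Disjoint X C) :
    rk (contract M C) X + rk M C = rk M (X ∪ C) := by
  obtain ⟨J, hJ⟩ := M.exists_isBasis' C
  obtain ⟨K, hK, hJK⟩ :=
    hJ.indep.subset_isBasis'_of_subset (hJ.subset.trans (subset_union_right (s := X)))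
  have hKC : K ∩ C = J :=
    (hJ.eq_of_subset_indep (hK.indep.subset inter_subset_left) (subset_inter hJK hJ.subset)
      inter_subset_right).symm
  have hcontract : (M ／ C).IsBasis' (K \ C) X := by
    simpa [hXC.sdiff_eq_left] using
      hK.contract_isBasis' hJ (hK.indep.subset (union_subset sdiff_subset hJK))
  have hrk : rk (contract M C) X = (K \ C).ncard := rk_eq_ncard_of_isBasis' hcontract
  rw [hrk, rk_eq_ncard_of_isBasis' hJ, rk_eq_ncard_of_isBasis' hK, ← hKC, add_comm,
    ncard_inter_add_ncard_sdiff_eq_ncard K C hK.indep.finite]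

lemma lam_delete [M.RankFinite] (D X : Set α) :
    lam (delete M D) X = rk M (X \ D) + rk M ((M.E \ D) \ X) - rk M (M.E \ D) := by
  simp only [lam, delete_ground, rk_delete, sdiff_right_comm _ X D, sdiff_idem]

lemma lam_contract [M.RankFinite] (hC : C ⊆ M.E) (hXC : Disjoint X C) :
    lam (contract M C) X = rk M (X ∪ C) + rk M (M.E \ X) - rk M M.E - rk M C := by
  have hX := rk_contract_add (M := M) hXC
  have hcompl := rk_contract_add (M := M) (X := (M.E \ C) \ X)
    (disjoint_sdiff_left.mono_left sdiff_subset)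
  have hground := rk_contract_add (M := M) (X := M.E \ C) disjoint_sdiff_left
  rw [show (M.E \ C) \ X ∪ C = M.E \ X by tauto_set] at hcompl
  rw [sdiff_union_of_subset hC] at hground
  simp only [lam, contract_ground]
  omega

lemma lam_add_lam_delete_contract [M.RankFinite] {e f : α} {A : Set α} (hef : e ≠ f)
    (hf : f ∈ M.E) (heA : e ∉ A) (hfA : f ∉ A) :
    lam M A + lam (contract (delete M {e}) {f}) A =
      lam (delete M {e}) A + lam (contract M {f}) A := by
  have hfA' : Disjoint A {f} := disjoint_singleton_right.2 hfA
  have hfMe : {f} ⊆ (delete M {e}).E := by simpa [delete_ground] using ⟨hf, hef.symm⟩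
  rw [lam_contract hfMe hfA', lam_contract (singleton_subset_iff.2 hf) hfA', lam_delete]
  have hAfe : e ∉ A ∪ {f} := by simpa [hef] using heA
  have hfe : e ∉ ({f} : Set α) := by simpa using hef
  simp only [lam, rk_delete, delete_ground, sdiff_singleton_eq_self heA,
    sdiff_singleton_eq_self hAfe, sdiff_singleton_eq_self hfe, sdiff_right_comm _ A {e}, sdiff_idem]
  ring

theorem lam_eq_of_contract_delete_general
    (N : Matroid α)
    (k : ℕ) (A B : Set α) (hsep : ExactKSep N k A B)
    (M : Matroid α) (hMfin : M.Finite)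
    (e f : α) (hef : e ≠ f) (hf : f ∈ M.E \ N.E)
    (hN : contract (delete M {e}) {f} = N)
    (h1 : lam (contract M {f}) A = (k : ℤ) - 1)
    (h2 : lam (delete M {e}) A = (k : ℤ) - 1) :
    lam M A = (k : ℤ) - 1 := by
  obtain ⟨hAB, -, -, -, hlamN⟩ := hsep
  subst hN
  have hA : A ⊆ (M.E \ {e}) \ {f} := hAB.subset.trans' subset_union_left
  have hsum := lam_add_lam_delete_contract hef hf.1 (fun heA ↦ (hA heA).1.2 rfl)
    fun hfA ↦ (hA hfA).2 rfl
  omega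

/-- **Lemma 4.3(i)**. If `M \ e / f = N`, `λ_{M/f}(A) = k − 1` and `λ_{M\e}(A) = k − 1`,
then `λ_M(A) = k − 1`. -/
theorem lam_eq_of_contract_delete
    (N : Matroid α) (hNfin : N.Finite) (hNsimple : Simple N) (hNcosimple : Cosimple N)
    (k : ℕ) (hk : 1 ≤ k) (A B : Set α) (hsep : ExactKSep N k A B)
    (M : Matroid α) (hMfin : M.Finite) (hMsimple : Simple M) (hMcosimple : Cosimple M)
    (e f : α) (hef : e ≠ f) (he : e ∈ M.E \ N.E) (hf : f ∈ M.E \ N.E)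
    (hN : contract (delete M {e}) {f} = N)
    (h1 : lam (contract M {f}) A = (k : ℤ) - 1)
    (h2 : lam (delete M {e}) A = (k : ℤ) - 1) :
    lam M A = (k : ℤ) - 1 :=
  lam_eq_of_contract_delete_general N k A B hsep M hMfin e f hef hf hN h1 h2

end SeymourDecomp
end

section
/- Let N be a finite simple and cosimple matroid with an exact k-separation (A, B). Let M be a finite simple and cosimple matroid with distinct elements e, f ∈ E(M) \ E(N) such that M \ e / f = N. If M / f has a circuit C_e with e ∈ C_e ⊆ B ∪ {e} and M \ e has a cocircuit D_f with f ∈ D_f ⊆ B ∪ {f}, then r_M(A) = r_N(A) and r_M(B ∪ {e, f}) = r_N(B) + 1. -/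
open Set

/-!
Put `M' = M ＼ {e}`, so that `N = M' ／ {f}`. The set `A` avoids the cocircuit `D_f` of `M'`,
and an element of a cocircuit is not spanned by the complement, so `f ∉ cl_{M'}(A)` and contracting
`f` leaves the rank of `A` unchanged. On the other side, contracting the nonloop `f` lowers the
rank of `B ∪ {f}` by exactly one, and the circuit `C_e` of `M ／ {f}` places `e` in
`cl_M(B ∪ {f})`, so adding `e` does not raise the rank.
-/

namespace Matroid

variable {α : Type*} {M : Matroid α} {C K X Z : Set α} {e f : α}

lemma eRk_insert_of_mem_closure (he : e ∈ M.closure X) : M.eRk (insert e X) = M.eRk X := by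
  rw [← M.eRk_closure_eq, M.closure_insert_eq_of_mem_closure he, M.eRk_closure_eq]

lemma IsCocircuit.notMem_closure_compl (hK : M.IsCocircuit K) (he : e ∈ K) :
    e ∉ M.closure (M.E \ K) := by
  intro hcl
  have heE := hK.subset_ground he
  rw [isCocircuit_iff_minimal_compl_nonspanning] at hK
  have hspan : M.Spanning (M.E \ (K \ {e})) :=
    not_not.1 (hK.not_prop_of_ssubset (sdiff_singleton_ssubset.2 he))
  have hins : M.E \ (K \ {e}) = insert e (M.E \ K) := by
    ext x
    by_cases hx : x = e <;> simp_all
  rw [hins, spanning_iff_closure_eq, closure_insert_eq_of_mem_closure hcl] at hspan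
  exact hK.prop (M.spanning_iff_closure_eq.2 hspan)

lemma IsNonloop.eRk_contractElem_add_one (hf : M.IsNonloop f) (X : Set α) :
    (M ／ {f}).eRk X + 1 = M.eRk (insert f X) := by
  obtain ⟨I, hI, hfI⟩ :=
    hf.indep.subset_isBasis'_of_subset (singleton_subset_iff.2 (mem_insert f X))
  have hfE : f ∉ (M ／ {f}).E := fun h ↦ h.2 rfl
  rw [← eRk_insert_of_notMem_ground X hfE,
    ← (hI.contract_isBasis'_sdiff_of_subset hfI).encard_eq_eRk, ← hI.encard_eq_eRk,
    encard_sdiff_singleton_add_one (singleton_subset_iff.1 hfI)]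

lemma IsCocircuit.eRk_contractElem_of_subset_compl (hK : M.IsCocircuit K) (hf : f ∈ K)
    (hX : X ⊆ M.E \ K) : (M ／ {f}).eRk X = M.eRk X := by
  have hfX : f ∉ M.closure X :=
    notMem_subset (M.closure_subset_closure hX) (hK.notMem_closure_compl hf)
  have h := (hK.isNonloop_of_mem hf).eRk_contractElem_add_one X
  rw [eRk_insert_eq_add_one ⟨hK.subset_ground hf, hfX⟩] at h
  exact WithTop.add_right_cancel ENat.one_ne_top h

lemma IsCircuit.mem_closure_union_of_contract (hC : (M ／ Z).IsCircuit C) (he : e ∈ C) :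
    e ∈ M.closure (C \ {e} ∪ Z) :=
  ((M.contract_closure_eq Z _) ▸ hC.mem_closure_sdiff_singleton_of_mem he).1

end Matroid

namespace SeymourDecomp

open scoped Matroid

lemma isCircuit_iff {M : Matroid α} {C : Set α} : IsCircuit M C ↔ M.IsCircuit C :=
  Matroid.isCircuit_iff_forall_ssubset.symm

lemma isCocircuit_iff {M : Matroid α} {K : Set α} : IsCocircuit M K ↔ M.IsCocircuit K :=
  isCircuit_iff

lemma contract_eq (M : Matroid α) (C : Set α) : contract M C = M ／ C := rfl

lemma delete_eq (M : Matroid α) (D : Set α) : delete M D = M ＼ D := rfl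

lemma cast_rk_eq_eRk (M : Matroid α) [M.RankFinite] (X : Set α) : (rk M X : ℕ∞) = M.eRk X := by
  obtain ⟨I, hI⟩ := M.exists_isBasis' X
  have hcast : ∀ J, M.Indep J → (J.ncard : ℕ∞) = J.encard := fun J hJ ↦ hJ.finite.cast_ncard_eq
  have hgreatest : IsGreatest {n | ∃ J, M.Indep J ∧ J ⊆ X ∧ J.ncard = n} I.ncard := by
    refine ⟨⟨I, hI.indep, hI.subset, rfl⟩, ?_⟩
    rintro _ ⟨J, hJ, hJX, rfl⟩
    rw [← Nat.cast_le (α := ℕ∞), hcast J hJ, hcast I hI.indep, hI.encard_eq_eRk]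
    exact hJ.encard_le_eRk_of_subset hJX
  rw [rk, hgreatest.csSup_eq, hcast I hI.indep, hI.encard_eq_eRk]

theorem rank_eq_of_circuit_cocircuit_general
    (N : Matroid α)
    (k : ℕ) (A B : Set α) (hsep : ExactKSep N k A B)
    (M : Matroid α) (hMfin : M.Finite)
    (e f : α)
    (hN : contract (delete M {e}) {f} = N)
    (hC : ∃ C : Set α, IsCircuit (contract M {f}) C ∧ e ∈ C ∧ C ⊆ B ∪ {e})
    (hD : ∃ D : Set α, IsCocircuit (delete M {e}) D ∧ f ∈ D ∧ D ⊆ B ∪ {f}) :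
    rk M A = rk N A ∧ rk M (B ∪ ({e, f} : Set α)) = rk N B + 1 := by
  obtain ⟨C, hC, heC, hCB⟩ := hC
  obtain ⟨D, hD, hfD, hDB⟩ := hD
  obtain ⟨hAB, hdisj, -, -, -⟩ := hsep
  rw [isCircuit_iff, contract_eq] at hC
  rw [isCocircuit_iff, delete_eq] at hD
  subst hN
  have hA : A ⊆ (M.E \ {e}) \ {f} := subset_union_left.trans hAB.subset
  have hB : B ⊆ (M.E \ {e}) \ {f} := subset_union_right.trans hAB.subset
  have hAD : A ⊆ (M ＼ {e}).E \ D := fun x hx ↦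
    ⟨(hA hx).1, fun hxD ↦ (hDB hxD).elim (disjoint_left.1 hdisj hx) (hA hx).2⟩
  have hecl : e ∈ M.closure (insert f B) := by
    refine M.closure_subset_closure ?_ (hC.mem_closure_union_of_contract heC)
    rw [union_singleton]
    exact insert_subset_insert (sdiff_subset_iff.2 (hCB.trans_eq (union_comm _ _)))
  have hrkA : (M ＼ {e} ／ {f}).eRk A = M.eRk A := by
    rw [hD.eRk_contractElem_of_subset_compl hfD hAD]
    exact M.restrict_eRk_eq (hAD.trans sdiff_subset)
  have hrkB : (M ＼ {e} ／ {f}).eRk B + 1 = M.eRk (B ∪ {e, f}) := by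
    have hBf : insert f B ⊆ M.E \ {e} :=
      insert_subset (hD.subset_ground hfD) fun x hx ↦ (hB hx).1
    rw [(hD.isNonloop_of_mem hfD).eRk_contractElem_add_one, Matroid.delete_eq_restrict,
      M.restrict_eRk_eq hBf, union_insert, union_singleton, M.eRk_insert_of_mem_closure hecl]
  constructor <;> apply Nat.cast_injective (R := ℕ∞) <;> push_cast <;>
    simp only [contract_eq, delete_eq, cast_rk_eq_eRk]
  · exact hrkA.symm
  · exact hrkB.symm

/-- Rank computation in the proof of Lemma 4.3(i): if `M \ e / f = N`, `M / f` has a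
circuit `C_e` with `e ∈ C_e ⊆ B ∪ {e}`, and `M \ e` has a cocircuit `D_f` with
`f ∈ D_f ⊆ B ∪ {f}`, then `r_M(A) = r_N(A)` and `r_M(B ∪ {e, f}) = r_N(B) + 1`. -/
theorem rank_eq_of_circuit_cocircuit
    (N : Matroid α) (hNfin : N.Finite) (hNsimple : Simple N) (hNcosimple : Cosimple N)
    (k : ℕ) (hk : 1 ≤ k) (A B : Set α) (hsep : ExactKSep N k A B)
    (M : Matroid α) (hMfin : M.Finite) (hMsimple : Simple M) (hMcosimple : Cosimple M)
    (e f : α) (hef : e ≠ f) (he : e ∈ M.E \ N.E) (hf : f ∈ M.E \ N.E)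
    (hN : contract (delete M {e}) {f} = N)
    (hC : ∃ C : Set α, IsCircuit (contract M {f}) C ∧ e ∈ C ∧ C ⊆ B ∪ {e})
    (hD : ∃ D : Set α, IsCocircuit (delete M {e}) D ∧ f ∈ D ∧ D ⊆ B ∪ {f}) :
    rk M A = rk N A ∧ rk M (B ∪ ({e, f} : Set α)) = rk N B + 1 :=
  rank_eq_of_circuit_cocircuit_general N k A B hsep M hMfin e f hN hC hD

end SeymourDecomp
end
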